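/- arXiv:1710.02519 — 3 statements merged into one kernel-verified Lean document; each statement's English description precedes it below -/
import Mathlib

section
/- Let h, A, D : ℝ → ℝ be twice continuously differentiable on a neighborhood of a point L^sec ∈ ℝ with h'(L^sec) = 0, h''(L^sec) ≠ 0 and A(L^sec) > 0, and let σ₀, φ ∈ ℝ satisfy sin(σ₀ − φ) = 0. Then there exist constants ε₀ > 0, c > 0 and C > 0 such that for every ε ∈ (0, ε₀) and every η ∈ [0, c ε], the dissipative toy model dσ/dt = h'(L) + ε A'(L) cos(σ − φ), dL/dt = ε A(L) sin(σ − φ) − η D(L) admits an equilibrium point (σ_d, L_d), i.e. a point at which both right-hand sides vanish, which moreover can be chosen so that |L_d − L^sec| ≤ C ε and |σ_d − σ₀| ≤ C η/ε. -/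
/-! Since `sin (σ₀ - φ) = 0`, the second equation can be solved exactly for the angle:
`σ(L) = σ₀ + cos (σ₀ - φ) * arcsin (η D(L) / (ε A(L)))` is defined and `O(η / ε)`-close to `σ₀`
as long as `η ≲ ε`. Substituting it into the first equation leaves `h'(L) + O(ε) = 0`. As `h'` has
a simple zero at `Lsec`, its values at `Lsec ± r` are `≈ ± h''(Lsec) r`, which dominate the `O(ε)`
perturbation once `r ≈ ε`, and the intermediate value theorem produces `L_d`. -/

open Real Set Filter Topology

theorem ContDiffAt.eventually_contDiffAt_deriv {𝕜 F : Type*} [NontriviallyNormedField 𝕜]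
    [NormedAddCommGroup F] [NormedSpace 𝕜 F] {f : 𝕜 → F} {x : 𝕜} {n : ℕ}
    (hf : ContDiffAt 𝕜 (n + 1) f x) : ∀ᶠ y in 𝓝 x, ContDiffAt 𝕜 n (deriv f) y := by
  obtain ⟨u, hu, hfu⟩ := hf.contDiffOn le_rfl (by simp)
  obtain ⟨s, hsu, hs, hxs⟩ := mem_nhds_iff.1 hu
  filter_upwards [hs.mem_nhds hxs] with y hy
  exact ((hfu.mono hsu).deriv_of_isOpen hs le_rfl).contDiffAt (hs.mem_nhds hy)

theorem eventually_nhdsGT_zero_forall_Icc {p : ℝ → Prop} {a : ℝ} (h : ∀ᶠ x in 𝓝 a, p x) :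
    ∀ᶠ r in 𝓝[>] 0, ∀ x ∈ Icc (a - r) (a + r), p x :=
  nhdsWithin_le_nhds <| (eventually_closedBall_subset h).mono fun _ hr _ hx =>
    hr (Real.closedBall_eq_Icc ▸ hx)

theorem zero_mem_uIcc_of_abs_add_le_of_abs_sub_le {x y t : ℝ} (hx : |x + t| ≤ |t|)
    (hy : |y - t| ≤ |t|) : (0 : ℝ) ∈ uIcc x y := by
  rw [abs_le] at hx hy
  rcases le_total 0 t with ht | ht
  · rw [abs_of_nonneg ht] at hx hy
    exact mem_uIcc.2 (Or.inl ⟨by linarith, by linarith⟩)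
  · rw [abs_of_nonpos ht] at hx hy
    exact mem_uIcc.2 (Or.inr ⟨by linarith, by linarith⟩)

theorem HasDerivAt.eventually_exists_zero_add {f : ℝ → ℝ} {a k : ℝ} (hf : HasDerivAt f k a)
    (hk : k ≠ 0) (hfa : f a = 0) :
    ∀ᶠ r in 𝓝[>] 0, ∀ g : ℝ → ℝ, ContinuousOn (fun x => f x + g x) (Icc (a - r) (a + r)) →
      |g (a - r)| ≤ |k| * r / 2 → |g (a + r)| ≤ |k| * r / 2 →
      ∃ x ∈ Icc (a - r) (a + r), f x + g x = 0 := by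
  have hlin : ∀ᶠ x in 𝓝 a, |f x - (x - a) * k| ≤ |k| / 2 * |x - a| := by
    simpa [hfa] using (hasDerivAt_iff_isLittleO.1 hf).def (half_pos (abs_pos.2 hk))
  filter_upwards [eventually_nhdsGT_zero_forall_Icc hlin, self_mem_nhdsWithin]
    with r hr (hr0 : 0 < r) g hcont hgl hgr
  have hle : a - r ≤ a + r := by linarith
  have hl := hr (a - r) (left_mem_Icc.2 hle)
  have hr' := hr (a + r) (right_mem_Icc.2 hle)
  simp only [sub_sub_cancel_left, add_sub_cancel_left, abs_neg, abs_of_pos hr0, neg_mul,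
    sub_neg_eq_add] at hl hr'
  have h0 : (0 : ℝ) ∈ uIcc (f (a - r) + g (a - r)) (f (a + r) + g (a + r)) :=
    zero_mem_uIcc_of_abs_add_le_of_abs_sub_le (t := r * k)
      (by rw [abs_mul, abs_of_pos hr0, add_right_comm]
          linarith [abs_add_le (f (a - r) + r * k) (g (a - r))])
      (by rw [abs_mul, abs_of_pos hr0, add_sub_right_comm]
          linarith [abs_add_le (f (a + r) - r * k) (g (a + r))])
  obtain ⟨x, hx, hx0⟩ := intermediate_value_uIcc (uIcc_of_le hle ▸ hcont) h0
  exact ⟨x, uIcc_of_le hle ▸ hx, hx0⟩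

theorem abs_arcsin_le_pi_div_two_mul_abs (x : ℝ) : |arcsin x| ≤ π / 2 * |x| := by
  suffices key : ∀ y, 0 ≤ y → arcsin y ≤ π / 2 * y by
    rcases le_total 0 x with hx | hx
    · rw [abs_of_nonneg (arcsin_nonneg.2 hx), abs_of_nonneg hx]
      exact key x hx
    · rw [abs_of_nonpos (arcsin_nonpos.2 hx), abs_of_nonpos hx, ← arcsin_neg]
      exact key (-x) (neg_nonneg.2 hx)
  intro y hy
  rcases le_total y 1 with hy1 | hy1
  · have hjordan := mul_le_sin (arcsin_nonneg.2 hy) (arcsin_le_pi_div_two y)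
    rw [sin_arcsin (by linarith) hy1] at hjordan
    calc arcsin y = π / 2 * (2 / π * arcsin y) := by field_simp
      _ ≤ π / 2 * y := by gcongr
  · rw [arcsin_of_one_le hy1]
    exact le_mul_of_one_le_right (by positivity) hy1

theorem sin_add_cos_mul_arcsin {θ x : ℝ} (hθ : sin θ = 0) (hx : |x| ≤ 1) :
    sin (θ + cos θ * arcsin x) = x := by
  have hcos : cos θ = 1 ∨ cos θ = -1 := by
    have := sin_sq_add_cos_sq θ
    rw [hθ] at this
    exact sq_eq_one_iff.1 (by linarith)
  obtain ⟨hx1, hx2⟩ := abs_le.1 hx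
  rw [sin_add, hθ, zero_mul, zero_add]
  rcases hcos with h | h <;> simp [h, sin_arcsin hx1 hx2]

theorem exists_equilibrium_of_local_bounds {h A D : ℝ → ℝ} {Lsec σ₀ φ ε η r b M a Dm : ℝ}
    (hsin : sin (σ₀ - φ) = 0) (hε : 0 < ε) (hη : η ∈ Icc 0 (a / Dm * ε)) (ha : 0 < a)
    (hDm : 0 < Dm) (hr : 0 ≤ r) (hb : ε * M ≤ b)
    (hloc : ∀ L ∈ Icc (Lsec - r) (Lsec + r), ContinuousAt (deriv h) L ∧
      ContinuousAt (deriv A) L ∧ ContinuousAt A L ∧ ContinuousAt D L ∧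
      |deriv A L| ≤ M ∧ a ≤ A L ∧ |D L| ≤ Dm)
    (hroot : ∀ g : ℝ → ℝ, ContinuousOn (fun L => deriv h L + g L) (Icc (Lsec - r) (Lsec + r)) →
      |g (Lsec - r)| ≤ b → |g (Lsec + r)| ≤ b →
      ∃ L ∈ Icc (Lsec - r) (Lsec + r), deriv h L + g L = 0) :
    ∃ σd Ld, deriv h Ld + ε * deriv A Ld * cos (σd - φ) = 0 ∧
      ε * A Ld * sin (σd - φ) - η * D Ld = 0 ∧ |Ld - Lsec| ≤ r ∧
      |σd - σ₀| ≤ π / 2 * Dm / a * η / ε := by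
  obtain ⟨hη0, hηc⟩ := hη
  set I := Icc (Lsec - r) (Lsec + r)
  set x : ℝ → ℝ := fun L => η * D L / (ε * A L)
  set σ : ℝ → ℝ := fun L => σ₀ + cos (σ₀ - φ) * arcsin (x L)
  have hAε : ∀ L ∈ I, ε * A L ≠ 0 := fun L hL =>
    (mul_pos hε (ha.trans_le (hloc L hL).2.2.2.2.2.1)).ne'
  have hx : ∀ L ∈ I, |x L| ≤ Dm / a * η / ε := by
    intro L hL
    obtain ⟨-, -, -, -, -, haA, hDL⟩ := hloc L hL
    calc |x L| = η * |D L| / (ε * A L) := by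
          rw [abs_div, abs_mul, abs_mul, abs_of_nonneg hη0, abs_of_pos hε,
            abs_of_pos (ha.trans_le haA)]
      _ ≤ η * Dm / (ε * a) := by gcongr
      _ = Dm / a * η / ε := by field_simp
  have hx1 : Dm / a * η / ε ≤ 1 := by
    calc Dm / a * η / ε ≤ Dm / a * (a / Dm * ε) / ε := by gcongr
      _ = 1 := by field_simp
  have hsinσ : ∀ L ∈ I, sin (σ L - φ) = x L := fun L hL => by
    rw [show σ L - φ = σ₀ - φ + cos (σ₀ - φ) * arcsin (x L) by ring]
    exact sin_add_cos_mul_arcsin hsin ((hx L hL).trans hx1)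
  have hg : ∀ L ∈ I, |ε * deriv A L * cos (σ L - φ)| ≤ b := fun L hL => by
    rw [abs_mul, abs_mul, abs_of_pos hε]
    calc ε * |deriv A L| * |cos (σ L - φ)| ≤ ε * |deriv A L| * 1 := by
          gcongr; exact abs_cos_le_one _
      _ ≤ ε * M := by rw [mul_one]; gcongr; exact (hloc L hL).2.2.2.2.1
      _ ≤ b := hb
  have hcont : ContinuousOn (fun L => deriv h L + ε * deriv A L * cos (σ L - φ)) I := by
    refine continuousOn_of_forall_continuousAt fun L hL => ?_
    obtain ⟨h1, h2, h3, h4, -⟩ := hloc L hL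
    have := hAε L hL
    fun_prop (disch := assumption)
  have hrr : Lsec - r ≤ Lsec + r := by linarith
  obtain ⟨Ld, hLd, hLd0⟩ :=
    hroot _ hcont (hg _ (left_mem_Icc.2 hrr)) (hg _ (right_mem_Icc.2 hrr))
  refine ⟨σ Ld, Ld, hLd0, ?_, abs_sub_le_iff.2 ⟨by linarith [hLd.2], by linarith [hLd.1]⟩, ?_⟩
  · rw [hsinσ Ld hLd, mul_div_cancel₀ _ (hAε Ld hLd), sub_self]
  · calc |σ Ld - σ₀| = |cos (σ₀ - φ)| * |arcsin (x Ld)| := by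
          rw [← abs_mul]; congr 1; ring
      _ ≤ 1 * (π / 2 * (Dm / a * η / ε)) := by
          gcongr
          · exact abs_cos_le_one _
          · exact (abs_arcsin_le_pi_div_two_mul_abs _).trans (by gcongr; exact hx Ld hLd)
      _ = π / 2 * Dm / a * η / ε := by ring

/-- Existence part of the paper's Theorem 1: for the dissipative toy model
`dσ/dt = h'(L) + ε A'(L) cos (σ - φ)`, `dL/dt = ε A(L) sin (σ - φ) - η D(L)`,
if `h`, `A`, `D` are `C²` near `Lsec` with `h'(Lsec) = 0`, `h''(Lsec) ≠ 0`,
`A(Lsec) > 0`, and `sin (σ₀ - φ) = 0`, then there are constants `ε₀, c, C > 0`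
such that for all `ε ∈ (0, ε₀)` and `η ∈ [0, c ε]` the system has an
equilibrium `(σ_d, L_d)` with `|L_d - Lsec| ≤ C ε` and `|σ_d - σ₀| ≤ C η/ε`. -/
theorem dissipative_equilibrium_existence
    (h A D : ℝ → ℝ) (Lsec σ₀ φ : ℝ)
    (hh : ContDiffAt ℝ 2 h Lsec) (hA : ContDiffAt ℝ 2 A Lsec)
    (hD : ContDiffAt ℝ 2 D Lsec)
    (hcrit : deriv h Lsec = 0) (hnd : deriv (deriv h) Lsec ≠ 0)
    (hApos : 0 < A Lsec) (hsin : Real.sin (σ₀ - φ) = 0) :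
    ∃ ε₀ > (0:ℝ), ∃ c > (0:ℝ), ∃ C > (0:ℝ),
      ∀ ε ∈ Ioo (0:ℝ) ε₀, ∀ η ∈ Icc (0:ℝ) (c * ε),
        ∃ σd Ld : ℝ,
          deriv h Ld + ε * deriv A Ld * Real.cos (σd - φ) = 0 ∧
          ε * A Ld * Real.sin (σd - φ) - η * D Ld = 0 ∧
          |Ld - Lsec| ≤ C * ε ∧ |σd - σ₀| ≤ C * η / ε := by
  have hh' := hh.eventually_contDiffAt_deriv (n := 1)
  have hA' := hA.eventually_contDiffAt_deriv (n := 1)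
  have hroot :=
    (hh'.self_of_nhds.differentiableAt one_ne_zero).hasDerivAt.eventually_exists_zero_add hnd hcrit
  set k := deriv (deriv h) Lsec
  obtain ⟨M, hM, hAM⟩ : ∃ M, 0 < M ∧ |deriv A Lsec| < M := ⟨_, by positivity, lt_add_one _⟩
  obtain ⟨a, ha, haA⟩ : ∃ a, 0 < a ∧ a < A Lsec := ⟨_, half_pos hApos, half_lt_self hApos⟩
  obtain ⟨Dm, hDm, hDDm⟩ : ∃ Dm, 0 < Dm ∧ |D Lsec| < Dm := ⟨_, by positivity, lt_add_one _⟩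
  have hloc : ∀ᶠ L in 𝓝 Lsec, ContinuousAt (deriv h) L ∧ ContinuousAt (deriv A) L ∧
      ContinuousAt A L ∧ ContinuousAt D L ∧ |deriv A L| ≤ M ∧ a ≤ A L ∧ |D L| ≤ Dm := by
    filter_upwards [hh', hA', hA.eventually (by simp), hD.eventually (by simp),
      hA'.self_of_nhds.continuousAt.abs.eventually_lt continuousAt_const hAM,
      continuousAt_const.eventually_lt hA.continuousAt haA,
      hD.continuousAt.abs.eventually_lt continuousAt_const hDDm] with L h1 h2 h3 h4 h5 h6 h7
    exact ⟨h1.continuousAt, h2.continuousAt, h3.continuousAt, h4.continuousAt, h5.le, h6.le, h7.le⟩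
  have hk : 0 < |k| := abs_pos.2 hnd
  -- The radius `r = (2 M / |k|) ε` makes the tolerance `|k| r / 2` of `hroot` equal to `M ε`.
  obtain ⟨ε₀, hε₀, hsmall⟩ := mem_nhdsGT_iff_exists_Ioo_subset.1 <|
    eventually_nhdsGT_zero_mul_left (by positivity : 0 < 2 * M / |k|)
      ((eventually_nhdsGT_zero_forall_Icc hloc).and hroot)
  refine ⟨ε₀, hε₀, a / Dm, by positivity, 2 * M / |k| + π / 2 * Dm / a, by positivity,
    fun ε hε η hη => ?_⟩
  obtain ⟨hloc, hroot⟩ := hsmall hε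
  obtain ⟨hε0, -⟩ := hε
  obtain ⟨σd, Ld, h1, h2, hL, hσ⟩ := exists_equilibrium_of_local_bounds hsin hε0 hη ha hDm
    (by positivity) (le_of_eq (by field_simp)) hloc hroot
  refine ⟨σd, Ld, h1, h2, hL.trans ?_, hσ.trans ?_⟩
  · gcongr; exact le_add_of_nonneg_right (by positivity)
  · gcongr
    · exact hη.1
    · exact le_add_of_nonneg_left (by positivity)
end

section
/- Let h, A, D : ℝ → ℝ be twice continuously differentiable on a neighborhood of L^sec ∈ ℝ with h'(L^sec) = 0, h''(L^sec) ≠ 0 and A(L^sec) > 0, and let σ₀, φ ∈ ℝ satisfy sin(σ₀ − φ) = 0. Then there exists ε₀ > 0 such that for each ε ∈ (0, ε₀) the following holds: letting L₀ = L₀(ε) be the unique solution near L^sec of h'(L) + ε A'(L) cos(σ₀ − φ) = 0, there exist c > 0 and a continuously differentiable curve η ↦ (σ_d(η), L_d(η)) defined for η ∈ [0, c), consisting of equilibrium points of the dissipative toy model dσ/dt = h'(L) + ε A'(L) cos(σ − φ), dL/dt = ε A(L) sin(σ − φ) − η D(L), such that (σ_d(0), L_d(0)) = (σ₀, L₀),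 the derivative of L_d at η = 0 vanishes, and the derivative of σ_d at η = 0 equals D(L₀) / (ε A(L₀) cos(σ₀ − φ)). In particular, at first order in η the equilibrium is (σ₀ + η D(L₀)/(ε A(L₀) cos(σ₀ − φ)), L₀): the drag shifts the equilibrium along the σ axis while leaving the action L unchanged to first order. -/
/-!
The perturbed critical point `L₀(ε)` is the zero of `(ε, L) ↦ h'(L) + ε A'(L) cos (σ₀ - φ)`
continued from `Lsec` by the implicit function theorem, which applies since `h''(Lsec) ≠ 0`.
For fixed `ε`, the equilibria with drag `η` are the zeros of a field `F(η, σ, L)` whose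
`(σ, L)`-Jacobian at `(0, σ₀, L₀)` is antidiagonal, with entries
`q = h''(L₀) + ε A''(L₀) cos (σ₀ - φ)` and `p = ε A(L₀) cos (σ₀ - φ)`, both nonzero; a second
application of the implicit function theorem gives the `C¹` curve `η ↦ (σ_d(η), L_d(η))`.
Differentiating `F(η, σ_d(η), L_d(η)) = 0` at `η = 0` yields `q L_d'(0) = 0` and
`p σ_d'(0) = D(L₀)`.
-/

open Real Set Filter Topology

theorem ContinuousLinearMap.isInvertible_of_injective {E : Type*} [NormedAddCommGroup E]
    [NormedSpace ℝ E] [FiniteDimensional ℝ E] (f : E →L[ℝ] E) (hf : Function.Injective f) :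
    f.IsInvertible :=
  ⟨(LinearEquiv.ofInjectiveEndo (f : E →ₗ[ℝ] E) hf).toContinuousLinearEquiv, rfl⟩

section Implicit

variable {E₁ E : Type*} [NormedAddCommGroup E₁] [NormedSpace ℝ E₁]
  [NormedAddCommGroup E] [NormedSpace ℝ E] [FiniteDimensional ℝ E]
  {f : E₁ × E → E} {f' : E₁ × E →L[ℝ] E} {u : E₁ × E}

theorem isInvertible_fderiv_comp_inr (hf : HasFDerivAt f f' u)
    (hinj : ∀ v, f' (0, v) = 0 → v = 0) :
    (fderiv ℝ f u ∘L .inr ℝ E₁ E).IsInvertible := by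
  refine ContinuousLinearMap.isInvertible_of_injective _ ((injective_iff_map_eq_zero _).2 ?_)
  simpa [hf.fderiv] using hinj

theorem exists_unique_zero_ball_of_hasFDerivAt [CompleteSpace E₁] (hf : ContDiffAt ℝ 1 f u)
    (hf' : HasFDerivAt f f' u) (hinj : ∀ v, f' (0, v) = 0 → v = 0) :
    ∃ ψ : E₁ → E, Tendsto ψ (𝓝 u.1) (𝓝 u.2) ∧ ∃ δ > 0, ∀ᶠ x in 𝓝 u.1,
      dist (ψ x) u.2 < δ ∧ f (x, ψ x) = f u ∧
        ∀ y, dist y u.2 < δ → f (x, y) = f u → y = ψ x := by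
  have hinv := isInvertible_fderiv_comp_inr hf' hinj
  set ψ := hf.implicitFunction one_ne_zero hinv
  have hψ : Tendsto ψ (𝓝 u.1) (𝓝 u.2) := by
    simpa only [hf.implicitFunction_apply_self] using
      (hf.contDiffAt_implicitFunction one_ne_zero hinv).continuousAt.tendsto
  have hiff := hf.eventually_apply_eq_iff_implicitFunction one_ne_zero hinv
  rw [nhds_prod_eq] at hiff
  obtain ⟨P, hP, Q, hQ, hPQ⟩ := eventually_prod_iff.1 hiff
  obtain ⟨δ, hδ, hball⟩ := Metric.eventually_nhds_iff.1 hQ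
  refine ⟨ψ, hψ, δ, hδ, ?_⟩
  filter_upwards [hP, hψ.eventually (Metric.ball_mem_nhds u.2 hδ)] with x hx hxδ
  exact ⟨hxδ, (hPQ hx (hball hxδ)).2 rfl,
    fun y hy hfy => ((hPQ hx (hball hy)).1 hfy).symm⟩

theorem HasFDerivAt.apply_zero_eq_smul {F : Type*} [NormedAddCommGroup F] [NormedSpace ℝ F]
    {f : E₁ × ℝ → F} {f' : E₁ × ℝ →L[ℝ] F} {u : E₁ × ℝ} {a : F} (hf : HasFDerivAt f f' u)
    (hpartial : HasDerivAt (fun y => f (u.1, y)) a u.2) (v : ℝ) : f' (0, v) = v • a := by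
  have hγ : HasDerivAt (fun y : ℝ => (u.1, y)) ((0 : E₁), (1 : ℝ)) u.2 :=
    (hasDerivAt_const _ _).prodMk (hasDerivAt_id _)
  have hcomp := hf.comp_hasDerivAt u.2 hγ
  rw [← hcomp.unique hpartial, ← map_smul]
  simp

theorem exists_contDiffAt_curve_of_hasFDerivAt {f : ℝ × E → E} {f' : ℝ × E →L[ℝ] E}
    {u : ℝ × E} (hf : ContDiffAt ℝ 1 f u) (hf' : HasFDerivAt f f' u)
    (hinj : ∀ v, f' (0, v) = 0 → v = 0) :
    ∃ ψ : ℝ → E, ψ u.1 = u.2 ∧ ContDiffAt ℝ 1 ψ u.1 ∧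
      (∀ᶠ t in 𝓝 u.1, f (t, ψ t) = f u) ∧ f' (1, deriv ψ u.1) = 0 := by
  have hinv := isInvertible_fderiv_comp_inr hf' hinj
  set ψ := hf.implicitFunction one_ne_zero hinv
  have hψ0 : ψ u.1 = u.2 := hf.implicitFunction_apply_self one_ne_zero hinv
  have hψ : ContDiffAt ℝ 1 ψ u.1 := hf.contDiffAt_implicitFunction one_ne_zero hinv
  have hfψ := hf.eventually_apply_implicitFunction one_ne_zero hinv
  refine ⟨ψ, hψ0, hψ, hfψ, ?_⟩
  have hγ : HasDerivAt (fun t => (t, ψ t)) (1, deriv ψ u.1) u.1 :=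
    (hasDerivAt_id _).prodMk (hψ.differentiableAt one_ne_zero).hasDerivAt
  have hchain : HasDerivAt (fun t => f (t, ψ t)) (f' (1, deriv ψ u.1)) u.1 := by
    have hu : (u.1, ψ u.1) = u := by rw [hψ0]
    exact (hu ▸ hf').comp_hasDerivAt u.1 hγ
  exact hchain.unique ((hasDerivAt_const u.1 (f u)).congr_of_eventuallyEq hfψ)

end Implicit

/-- The point is `x = (η, σ, L)`, with the drag coefficient `η` as first coordinate, so that the
equilibria of the toy model with drag `η` are the zeros of `dissipativeField h A D ε φ (η, ·)`. -/
noncomputable def dissipativeField (h A D : ℝ → ℝ) (ε φ : ℝ) (x : ℝ × ℝ × ℝ) : ℝ × ℝ :=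
  (deriv h x.2.2 + ε * deriv A x.2.2 * cos (x.2.1 - φ),
    ε * A x.2.2 * sin (x.2.1 - φ) - x.1 * D x.2.2)

namespace dissipativeField

variable {h A D : ℝ → ℝ} {ε φ : ℝ}

theorem hasDerivAt_drag (η σ L : ℝ) :
    HasDerivAt (fun η => dissipativeField h A D ε φ (η, σ, L)) (0, -D L) η := by
  refine (hasDerivAt_const η (deriv h L + ε * deriv A L * cos (σ - φ))).prodMk ?_
  simpa using ((hasDerivAt_id η).mul_const (D L)).const_sub (ε * A L * sin (σ - φ))

theorem hasDerivAt_angle (η σ L : ℝ) :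
    HasDerivAt (fun σ => dissipativeField h A D ε φ (η, σ, L))
      (-(ε * deriv A L * sin (σ - φ)), ε * A L * cos (σ - φ)) σ := by
  have hσ : HasDerivAt (fun σ => σ - φ) 1 σ := (hasDerivAt_id σ).sub_const φ
  have h₁ := (hσ.cos.const_mul (ε * deriv A L)).const_add (deriv h L)
  have h₂ := (hσ.sin.const_mul (ε * A L)).sub_const (η * D L)
  simp only [mul_one, mul_neg] at h₁ h₂
  exact h₁.prodMk h₂

theorem hasDerivAt_action {η σ L h₂ A₁ A₂ D₁ : ℝ} (hh : HasDerivAt (deriv h) h₂ L)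
    (hA₁ : HasDerivAt A A₁ L) (hA₂ : HasDerivAt (deriv A) A₂ L) (hD : HasDerivAt D D₁ L) :
    HasDerivAt (fun L => dissipativeField h A D ε φ (η, σ, L))
      (h₂ + ε * A₂ * cos (σ - φ), ε * A₁ * sin (σ - φ) - η * D₁) L := by
  unfold dissipativeField
  exact (hh.add ((hA₂.const_mul ε).mul_const (cos (σ - φ)))).prodMk
    (((hA₁.const_mul ε).mul_const (sin (σ - φ))).sub (hD.const_mul η))

theorem contDiffAt {η σ L : ℝ} (hh : ContDiffAt ℝ 2 h L) (hA : ContDiffAt ℝ 2 A L)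
    (hD : ContDiffAt ℝ 1 D L) : ContDiffAt ℝ 1 (dissipativeField h A D ε φ) (η, σ, L) := by
  have hh' : ContDiffAt ℝ 1 (deriv h) L := hh.derivWithin (by norm_num)
  have hA' : ContDiffAt ℝ 1 (deriv A) L := hA.derivWithin (by norm_num)
  have hA1 : ContDiffAt ℝ 1 A L := hA.of_le (by norm_num)
  unfold dissipativeField
  fun_prop

theorem hasFDerivAt_apply_eq {F' : ℝ × ℝ × ℝ →L[ℝ] ℝ × ℝ} {σ₀ L₀ : ℝ}
    (hF : HasFDerivAt (dissipativeField h A D ε φ) F' (0, σ₀, L₀))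
    (hh : DifferentiableAt ℝ (deriv h) L₀) (hA₁ : DifferentiableAt ℝ A L₀)
    (hA₂ : DifferentiableAt ℝ (deriv A) L₀) (hD : DifferentiableAt ℝ D L₀)
    (hsin : sin (σ₀ - φ) = 0) (a b c : ℝ) :
    F' (a, b, c) = ((deriv (deriv h) L₀ + ε * deriv (deriv A) L₀ * cos (σ₀ - φ)) * c,
      ε * A L₀ * cos (σ₀ - φ) * b - D L₀ * a) := by
  have hdrag : F' (1, 0, 0) = (0, -D L₀) := by
    have hγ : HasDerivAt (fun η : ℝ => ((η, σ₀, L₀) : ℝ × ℝ × ℝ)) (1, 0, 0) 0 :=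
      (hasDerivAt_id _).prodMk (hasDerivAt_const _ _)
    have hcomp := hF.comp_hasDerivAt 0 hγ
    exact hcomp.unique (hasDerivAt_drag 0 σ₀ L₀)
  have hangle : F' (0, 1, 0) = (0, ε * A L₀ * cos (σ₀ - φ)) := by
    have hγ : HasDerivAt (fun σ : ℝ => ((0, σ, L₀) : ℝ × ℝ × ℝ)) (0, 1, 0) σ₀ :=
      (hasDerivAt_const _ _).prodMk ((hasDerivAt_id _).prodMk (hasDerivAt_const _ _))
    have hcomp := hF.comp_hasDerivAt σ₀ hγ
    simpa [hsin] using hcomp.unique (hasDerivAt_angle 0 σ₀ L₀)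
  have haction : F' (0, 0, 1) =
      (deriv (deriv h) L₀ + ε * deriv (deriv A) L₀ * cos (σ₀ - φ), 0) := by
    have hγ : HasDerivAt (fun L : ℝ => ((0, σ₀, L) : ℝ × ℝ × ℝ)) (0, 0, 1) L₀ :=
      (hasDerivAt_const _ _).prodMk ((hasDerivAt_const _ _).prodMk (hasDerivAt_id _))
    have hcomp := hF.comp_hasDerivAt L₀ hγ
    simpa [hsin] using hcomp.unique
      (hasDerivAt_action hh.hasDerivAt hA₁.hasDerivAt hA₂.hasDerivAt hD.hasDerivAt)
  have hbasis : ((a, b, c) : ℝ × ℝ × ℝ) = a • (1, 0, 0) + b • (0, 1, 0) + c • (0, 0, 1) := by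
    ext <;> simp
  rw [hbasis, map_add, map_add, map_smul, map_smul, map_smul, hdrag, hangle, haction]
  ext <;> simp <;> ring

end dissipativeField

theorem exists_equilibrium_curve {h A D : ℝ → ℝ} {ε φ σ₀ L₀ : ℝ}
    (hh : ContDiffAt ℝ 2 h L₀) (hA : ContDiffAt ℝ 2 A L₀) (hD : ContDiffAt ℝ 1 D L₀)
    (hsin : sin (σ₀ - φ) = 0) (heq : deriv h L₀ + ε * deriv A L₀ * cos (σ₀ - φ) = 0)
    (hq : deriv (deriv h) L₀ + ε * deriv (deriv A) L₀ * cos (σ₀ - φ) ≠ 0)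
    (hp : ε * A L₀ * cos (σ₀ - φ) ≠ 0) :
    ∃ c > (0:ℝ), ∃ σd Ld : ℝ → ℝ,
      ContDiffOn ℝ 1 σd (Ico 0 c) ∧ ContDiffOn ℝ 1 Ld (Ico 0 c) ∧
      (∀ η ∈ Ico (0:ℝ) c,
        deriv h (Ld η) + ε * deriv A (Ld η) * cos (σd η - φ) = 0 ∧
        ε * A (Ld η) * sin (σd η - φ) - η * D (Ld η) = 0) ∧
      σd 0 = σ₀ ∧ Ld 0 = L₀ ∧
      derivWithin Ld (Ico 0 c) 0 = 0 ∧
      derivWithin σd (Ico 0 c) 0 = D L₀ / (ε * A L₀ * cos (σ₀ - φ)) := by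
  set F := dissipativeField h A D ε φ
  have hF : ContDiffAt ℝ 1 F (0, σ₀, L₀) := dissipativeField.contDiffAt hh hA hD
  have hF' := (hF.differentiableAt one_ne_zero).hasFDerivAt
  have hF'_apply := dissipativeField.hasFDerivAt_apply_eq hF'
    ((hh.derivWithin (by norm_num)).differentiableAt one_ne_zero)
    (hA.differentiableAt two_ne_zero)
    ((hA.derivWithin (by norm_num)).differentiableAt one_ne_zero)
    (hD.differentiableAt one_ne_zero) hsin
  have hF0 : F (0, σ₀, L₀) = 0 := by simp [F, dissipativeField, hsin, heq]
  obtain ⟨ψ, hψ0, hψ, hψF, htangent⟩ := exists_contDiffAt_curve_of_hasFDerivAt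
    (u := (0, σ₀, L₀)) hF hF' (fun ⟨a, b⟩ hab => by
      rw [hF'_apply] at hab
      simp only [mul_zero, sub_zero, Prod.mk_eq_zero, mul_eq_zero, hq, hp, false_or] at hab
      simp [hab])
  dsimp only at hψ0 hψ hψF htangent
  rw [hF'_apply] at htangent
  rw [hF0] at hψF
  simp only [mul_one, Prod.mk_eq_zero, mul_eq_zero, hq, false_or, sub_eq_zero] at htangent
  obtain ⟨hLd', hσd'⟩ := htangent
  have hnear : ∀ᶠ η in 𝓝 (0:ℝ), ContDiffAt ℝ 1 ψ η ∧ F (η, ψ η) = 0 :=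
    (hψ.eventually (by simp)).and hψF
  obtain ⟨c, hc, hcurve⟩ := Metric.eventually_nhds_iff.1 hnear
  have hIco : ∀ η ∈ Ico (0:ℝ) c, dist η 0 < c := fun η hη => by
    simpa [Real.dist_eq, abs_of_nonneg hη.1] using hη.2
  have hψ_diff : DifferentiableAt ℝ ψ 0 := hψ.differentiableAt one_ne_zero
  have hIco0 : UniqueDiffWithinAt ℝ (Ico (0:ℝ) c) 0 := uniqueDiffOn_Ico 0 c 0 ⟨le_rfl, hc⟩
  refine ⟨c, hc, fun η => (ψ η).1, fun η => (ψ η).2,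
    fun η hη => (hcurve (hIco η hη)).1.fst.contDiffWithinAt,
    fun η hη => (hcurve (hIco η hη)).1.snd.contDiffWithinAt,
    fun η hη => Prod.mk_eq_zero.1 (hcurve (hIco η hη)).2, by simp [hψ0], by simp [hψ0], ?_, ?_⟩
  · exact ((hasFDerivAt_snd.comp_hasDerivAt 0 hψ_diff.hasDerivAt).hasDerivWithinAt.derivWithin
      hIco0).trans hLd'
  · exact ((hasFDerivAt_fst.comp_hasDerivAt 0 hψ_diff.hasDerivAt).hasDerivWithinAt.derivWithin
      hIco0).trans (eq_div_of_mul_eq hp ((mul_comm _ _).trans hσd'))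

theorem exists_perturbed_critical_point {h A : ℝ → ℝ} {Lsec : ℝ}
    (hh : ContDiffAt ℝ 2 h Lsec) (hA : ContDiffAt ℝ 2 A Lsec)
    (hcrit : deriv h Lsec = 0) (hnd : deriv (deriv h) Lsec ≠ 0) (c : ℝ) :
    ∃ ψ : ℝ → ℝ, Tendsto ψ (𝓝 0) (𝓝 Lsec) ∧ ∃ δ > 0, ∀ᶠ ε in 𝓝 0,
      (|ψ ε - Lsec| < δ ∧ deriv h (ψ ε) + ε * deriv A (ψ ε) * c = 0 ∧
        ∀ L, |L - Lsec| < δ → deriv h L + ε * deriv A L * c = 0 → L = ψ ε) ∧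
      deriv (deriv h) (ψ ε) + ε * deriv (deriv A) (ψ ε) * c ≠ 0 := by
  have hh₁ : ContDiffAt ℝ 1 (deriv h) Lsec := hh.derivWithin (by norm_num)
  have hA₁ : ContDiffAt ℝ 1 (deriv A) Lsec := hA.derivWithin (by norm_num)
  set f : ℝ × ℝ → ℝ := fun x => deriv h x.2 + x.1 * deriv A x.2 * c
  have hf : ContDiffAt ℝ 1 f (0, Lsec) := by fun_prop
  have hf' := (hf.differentiableAt one_ne_zero).hasFDerivAt
  have hpartial : HasDerivAt (fun L => f (0, L)) (deriv (deriv h) Lsec) Lsec := by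
    simpa [f] using (hh₁.differentiableAt one_ne_zero).hasDerivAt
  obtain ⟨ψ, hψ, δ, hδ, hzero⟩ := exists_unique_zero_ball_of_hasFDerivAt hf hf'
    (fun v hv => by simpa [hf'.apply_zero_eq_smul hpartial, hnd] using hv)
  have hq : ∀ᶠ x in 𝓝 ((0:ℝ), Lsec), deriv (deriv h) x.2 + x.1 * deriv (deriv A) x.2 * c ≠ 0 := by
    have := (hh₁.derivWithin (m := 0) (by norm_num)).continuousAt
    have := (hA₁.derivWithin (m := 0) (by norm_num)).continuousAt
    exact ContinuousAt.eventually_ne (by fun_prop) (by simpa using hnd)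
  refine ⟨ψ, hψ, δ, hδ, ?_⟩
  filter_upwards [hzero, (tendsto_id.prodMk_nhds hψ).eventually hq] with ε hε hqε
  simpa only [f, Real.dist_eq, hcrit, zero_mul, add_zero, id] using And.intro hε hqε

/-- First-order perturbative formula of the paper's Theorem 1: for small
`ε > 0`, letting `L₀` be the unique solution near `Lsec` of
`h'(L) + ε A'(L) cos (σ₀ - φ) = 0`, there is a `C¹` curve
`η ↦ (σ_d(η), L_d(η))` of equilibria of the dissipative toy model with
`(σ_d(0), L_d(0)) = (σ₀, L₀)`, `L_d'(0) = 0` and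
`σ_d'(0) = D(L₀)/(ε A(L₀) cos (σ₀ - φ))`: the drag shifts the equilibrium
along the `σ` axis while leaving `L` unchanged to first order. -/
theorem dissipative_equilibrium_first_order
    (h A D : ℝ → ℝ) (Lsec σ₀ φ : ℝ)
    (hh : ContDiffAt ℝ 2 h Lsec) (hA : ContDiffAt ℝ 2 A Lsec)
    (hD : ContDiffAt ℝ 2 D Lsec)
    (hcrit : deriv h Lsec = 0) (hnd : deriv (deriv h) Lsec ≠ 0)
    (hApos : 0 < A Lsec) (hsin : Real.sin (σ₀ - φ) = 0) :
    ∃ ε₀ > (0:ℝ), ∀ ε : ℝ, 0 < ε → ε < ε₀ →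
      ∃ r > (0:ℝ), ∃ L₀ : ℝ,
        (|L₀ - Lsec| < r ∧
          deriv h L₀ + ε * deriv A L₀ * Real.cos (σ₀ - φ) = 0 ∧
          (∀ L' : ℝ, |L' - Lsec| < r →
            deriv h L' + ε * deriv A L' * Real.cos (σ₀ - φ) = 0 → L' = L₀)) ∧
        ∃ c > (0:ℝ), ∃ σd Ld : ℝ → ℝ,
          ContDiffOn ℝ 1 σd (Ico 0 c) ∧ ContDiffOn ℝ 1 Ld (Ico 0 c) ∧
          (∀ η ∈ Ico (0:ℝ) c,
            deriv h (Ld η) + ε * deriv A (Ld η) * Real.cos (σd η - φ) = 0 ∧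
            ε * A (Ld η) * Real.sin (σd η - φ) - η * D (Ld η) = 0) ∧
          σd 0 = σ₀ ∧ Ld 0 = L₀ ∧
          derivWithin Ld (Ico 0 c) 0 = 0 ∧
          derivWithin σd (Ico 0 c) 0 =
            D L₀ / (ε * A L₀ * Real.cos (σ₀ - φ)) := by
  have hc : cos (σ₀ - φ) ≠ 0 := fun h0 => by
    simpa [hsin, h0] using sin_sq_add_cos_sq (σ₀ - φ)
  obtain ⟨ψ, hψ, δ, hδ, hperturbed⟩ := exists_perturbed_critical_point hh hA hcrit hnd (cos (σ₀ - φ))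
  have hregular : ∀ᶠ L in 𝓝 Lsec,
      ContDiffAt ℝ 2 h L ∧ ContDiffAt ℝ 2 A L ∧ ContDiffAt ℝ 2 D L ∧ 0 < A L :=
    (hh.eventually (by simp)).and ((hA.eventually (by simp)).and
      ((hD.eventually (by simp)).and (hA.continuousAt.eventually (lt_mem_nhds hApos))))
  obtain ⟨ε₀, hε₀, hsmall⟩ := Metric.eventually_nhds_iff.1 (hperturbed.and (hψ.eventually hregular))
  refine ⟨ε₀, hε₀, fun ε hε hεε₀ => ?_⟩
  obtain ⟨⟨hL₀, hq⟩, hhL₀, hAL₀, hDL₀, hApos'⟩ :=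
    hsmall (y := ε) (by simpa [Real.dist_eq, abs_of_pos hε] using hεε₀)
  exact ⟨δ, hδ, ψ ε, hL₀, exists_equilibrium_curve hhL₀ hAL₀ (hDL₀.of_le one_le_two) hsin hL₀.2.1
    hq (mul_ne_zero (mul_pos hε hApos').ne' hc)⟩
end

section
/- Let h, A, D : ℝ → ℝ be twice continuously differentiable on a neighborhood of L^sec ∈ ℝ with h'(L^sec) = 0, h''(L^sec) ≠ 0 and A(L^sec) > 0, and let σ₀, φ ∈ ℝ satisfy sin(σ₀ − φ) = 0. Then there exist positive constants γ₁, γ₂, γ₃ (depending only on h, A, D, σ₀, φ and the neighborhood) such that for every δ ∈ (0, 1) and all parameters ε > 0, η ≥ 0 satisfying |η D(L₀)/(ε A(L₀))| ≤ 1 − δ and γ₁ ε + γ₂ η + γ₃ ε² < δ, where L₀ = L₀(ε) is the unique solution near L^sec of h'(L) + ε A'(L) cos(σ₀ − φ) = 0, the dissipative toy model dσ/dt = h'(L) + ε A'(L) cos(σ − φ), dL/dt = ε A(L) sin(σ − φ) − η D(L) admits an equilibrium point. -/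
/-!
At an equilibrium `sin (σ - φ) = s L := η D(L) / (ε A(L))`; taking `cos (σ - φ) = c √(1 - s L ²)`
with `c = cos (σ₀ - φ) = ±1` reduces the first equation to
`F L := h'(L) + ε c A'(L) √(1 - s L ²) = 0`.
Since `h''` is bounded away from `0` near `Lsec`, `h'` moves by at least `m K ε` on either side of
the window `|L - L₀| ≤ K ε`, whereas `|F - h'| ≤ ε sup |A'|` and `|h'(L₀)| ≤ ε sup |A'|`, so `F`
changes sign there and vanishes by the intermediate value theorem. The smallness condition keeps
the window inside the neighbourhood and, through a Lipschitz bound on `D / A`, keeps `|s| ≤ 1`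
on it.
-/

open Real Set Metric Filter Topology
open scoped NNReal

theorem exists_cos_sin_eq {x y : ℝ} (h : x ^ 2 + y ^ 2 = 1) : ∃ θ : ℝ, cos θ = x ∧ sin θ = y := by
  obtain ⟨θ, hθ⟩ := (Complex.norm_eq_one_iff ⟨x, y⟩).1 (by
    rw [Complex.norm_eq_sqrt_sq_add_sq]; simp [h])
  exact ⟨θ, by simpa using congrArg Complex.re hθ, by simpa using congrArg Complex.im hθ⟩

theorem exists_zero_of_abs_sub_le_of_le_deriv {u u' F : ℝ → ℝ} {a ρ m e : ℝ} (hρ : 0 ≤ ρ)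
    (hu : ∀ z ∈ Icc (a - ρ) (a + ρ), HasDerivAt u (u' z) z)
    (hu' : ∀ z ∈ Icc (a - ρ) (a + ρ), m ≤ u' z)
    (hF : ContinuousOn F (Icc (a - ρ) (a + ρ)))
    (hFu : ∀ z ∈ Icc (a - ρ) (a + ρ), |F z - u z| ≤ e) (hua : |u a| + e ≤ m * ρ) :
    ∃ z ∈ Icc (a - ρ) (a + ρ), F z = 0 := by
  have hlo : a - ρ ∈ Icc (a - ρ) (a + ρ) := ⟨le_rfl, by linarith⟩
  have hmid : a ∈ Icc (a - ρ) (a + ρ) := ⟨by linarith, by linarith⟩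
  have hhi : a + ρ ∈ Icc (a - ρ) (a + ρ) := ⟨by linarith, le_rfl⟩
  have hgrowth := (convex_Icc (a - ρ) (a + ρ)).mul_sub_le_image_sub_of_le_deriv
    (fun z hz => (hu z hz).continuousAt.continuousWithinAt)
    (fun z hz => (hu z (interior_subset hz)).differentiableAt.differentiableWithinAt)
    (fun z hz => (hu z (interior_subset hz)).deriv ▸ hu' z (interior_subset hz))
  have hleft := hgrowth _ hlo _ hmid (by linarith)
  have hright := hgrowth _ hmid _ hhi (by linarith)
  have hFlo := abs_le.1 (hFu _ hlo)
  have hFhi := abs_le.1 (hFu _ hhi)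
  exact intermediate_value_Icc (by linarith) hF
    ⟨by linarith [le_abs_self (u a)], by linarith [neg_abs_le (u a)]⟩

theorem exists_equilibrium_of_root {h A D : ℝ → ℝ} {φ c ε η L : ℝ} (hc : |c| = 1) (hε : ε ≠ 0)
    (hA : A L ≠ 0) (hs : |η * D L / (ε * A L)| ≤ 1)
    (hroot : deriv h L + ε * deriv A L * (c * √(1 - (η * D L / (ε * A L)) ^ 2)) = 0) :
    ∃ σ, deriv h L + ε * deriv A L * cos (σ - φ) = 0 ∧ ε * A L * sin (σ - φ) - η * D L = 0 := by
  set s := η * D L / (ε * A L)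
  have hunit : (c * √(1 - s ^ 2)) ^ 2 + s ^ 2 = 1 := by
    rw [mul_pow, ← sq_abs c, hc, sq_sqrt (by linarith [(sq_le_one_iff_abs_le_one s).2 hs])]
    ring
  obtain ⟨θ, hcos, hsin⟩ := exists_cos_sin_eq hunit
  refine ⟨θ + φ, ?_, ?_⟩ <;> rw [add_sub_cancel_right]
  · rwa [hcos]
  · rw [hsin, mul_div_cancel₀ _ (mul_ne_zero hε hA), sub_self]

theorem LipschitzOnWith.abs_mul_le_of_mem_closedBall {g : ℝ → ℝ} {Λ : ℝ≥0} {x ρ k b y : ℝ}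
    (hg : LipschitzOnWith Λ g (closedBall x ρ)) (hk : 0 ≤ k) (hρ : 0 ≤ ρ)
    (hx : |k * g x| + k * Λ * ρ ≤ b) (hy : y ∈ closedBall x ρ) : |k * g y| ≤ b := by
  have hgy : |g y - g x| ≤ Λ * ρ := by
    rw [← Real.dist_eq]
    exact (hg.dist_le_mul y hy x (mem_closedBall_self hρ)).trans (by gcongr; exact hy)
  have hkgy : |k * g y - k * g x| ≤ k * (Λ * ρ) := by
    rw [← mul_sub, abs_mul, abs_of_nonneg hk]; gcongr
  linarith [abs_sub_abs_le_abs_sub (k * g y) (k * g x)]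

/-- `τ = ±1` orients `h'` so that it grows at rate at least `m` on `S`. -/
structure ToyModelBounds (h A D : ℝ → ℝ) (S : Set ℝ) (τ m M : ℝ) (Λ : ℝ≥0) : Prop where
  abs_eq_one : |τ| = 1
  contDiffAt_deriv : ∀ L ∈ S, ContDiffAt ℝ 1 (deriv h) L
  le_mul_deriv_deriv : ∀ L ∈ S, m ≤ τ * deriv (deriv h) L
  continuousAt_deriv : ∀ L ∈ S, ContinuousAt (deriv A) L
  abs_deriv_le : ∀ L ∈ S, |deriv A L| ≤ M
  pos : ∀ L ∈ S, 0 < A L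
  lipschitzOnWith : LipschitzOnWith Λ (fun L => D L / A L) S

namespace ToyModelBounds

variable {h A D : ℝ → ℝ} {S T : Set ℝ} {τ m M : ℝ} {Λ : ℝ≥0}

theorem mono (hb : ToyModelBounds h A D S τ m M Λ) (hTS : T ⊆ S) :
    ToyModelBounds h A D T τ m M Λ where
  abs_eq_one := hb.abs_eq_one
  contDiffAt_deriv L hL := hb.contDiffAt_deriv L (hTS hL)
  le_mul_deriv_deriv L hL := hb.le_mul_deriv_deriv L (hTS hL)
  continuousAt_deriv L hL := hb.continuousAt_deriv L (hTS hL)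
  abs_deriv_le L hL := hb.abs_deriv_le L (hTS hL)
  pos L hL := hb.pos L (hTS hL)
  lipschitzOnWith := hb.lipschitzOnWith.mono hTS

theorem exists_equilibrium {L₀ ρ φ c ε η δ : ℝ}
    (hb : ToyModelBounds h A D (closedBall L₀ ρ) τ m M Λ) (hc : |c| = 1) (hε : 0 < ε)
    (hη : 0 ≤ η) (hρ : 0 ≤ ρ)
    (hL₀ : deriv h L₀ + ε * deriv A L₀ * c = 0) (hs₀ : |η * D L₀ / (ε * A L₀)| ≤ 1 - δ)
    (hρM : 2 * ε * M ≤ m * ρ) (hρΛ : η * Λ * ρ ≤ ε * δ) :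
    ∃ σ L, deriv h L + ε * deriv A L * cos (σ - φ) = 0 ∧ ε * A L * sin (σ - φ) - η * D L = 0 := by
  set s : ℝ → ℝ := fun L => η * D L / (ε * A L)
  have hs_eq : s = fun L => η / ε * (D L / A L) :=
    funext fun L => (div_mul_div_comm η ε (D L) (A L)).symm
  have hs_le : ∀ L ∈ closedBall L₀ ρ, |s L| ≤ 1 := by
    have hs₀' : |s L₀| + η / ε * Λ * ρ ≤ 1 := by
      rw [mul_assoc, div_mul_eq_mul_div, ← mul_assoc]
      linarith [(div_le_iff₀ hε).2 (by linarith : η * Λ * ρ ≤ δ * ε)]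
    rw [hs_eq] at hs₀' ⊢
    exact fun L hL => hb.lipschitzOnWith.abs_mul_le_of_mem_closedBall (by positivity) hρ hs₀' hL
  set F : ℝ → ℝ := fun L => deriv h L + ε * deriv A L * (c * √(1 - s L ^ 2))
  have hF_cont : ContinuousOn F (closedBall L₀ ρ) := by
    have hs_cont : ContinuousOn s (closedBall L₀ ρ) := by
      rw [hs_eq]; exact continuousOn_const.mul hb.lipschitzOnWith.continuousOn
    refine .add (fun L hL => (hb.contDiffAt_deriv L hL).continuousAt.continuousWithinAt) ?_
    refine (continuousOn_const.mul fun L hL =>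
      (hb.continuousAt_deriv L hL).continuousWithinAt).mul ?_
    exact continuousOn_const.mul
      (continuous_sqrt.comp_continuousOn (continuousOn_const.sub (hs_cont.pow 2)))
  have hF_sub : ∀ L ∈ closedBall L₀ ρ, |F L - deriv h L| ≤ ε * M := fun L hL => calc
      |F L - deriv h L| = ε * |deriv A L| * √(1 - s L ^ 2) := by
        simp only [F, add_sub_cancel_left, abs_mul, abs_of_pos hε, hc, one_mul,
          abs_of_nonneg (sqrt_nonneg _)]
      _ ≤ ε * |deriv A L| :=
        mul_le_of_le_one_right (by positivity) (sqrt_le_one.mpr (by nlinarith [sq_nonneg (s L)]))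
      _ ≤ ε * M := by gcongr; exact hb.abs_deriv_le L hL
  obtain ⟨L, hL, hτF⟩ : ∃ L ∈ closedBall L₀ ρ, τ * F L = 0 := by
    rw [Real.closedBall_eq_Icc] at hb hF_cont hF_sub ⊢
    refine exists_zero_of_abs_sub_le_of_le_deriv hρ (u := fun L => τ * deriv h L) (e := ε * M)
      (fun L hL => ((hb.contDiffAt_deriv L hL).differentiableAt one_ne_zero).hasDerivAt.const_mul τ)
      hb.le_mul_deriv_deriv (continuousOn_const.mul hF_cont) (fun L hL => ?_) ?_
    · rw [← mul_sub, abs_mul, hb.abs_eq_one, one_mul]; exact hF_sub L hL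
    · have hmem : L₀ ∈ Icc (L₀ - ρ) (L₀ + ρ) := ⟨by linarith, by linarith⟩
      rw [abs_mul, hb.abs_eq_one, one_mul, eq_neg_of_add_eq_zero_left hL₀, abs_neg, abs_mul,
        abs_mul, hc, mul_one, abs_of_pos hε]
      nlinarith [hb.abs_deriv_le L₀ hmem]
  have hFL : F L = 0 := (mul_eq_zero.1 hτF).resolve_left (abs_pos.1 (hb.abs_eq_one ▸ one_pos))
  obtain ⟨σ, hσ⟩ := exists_equilibrium_of_root (φ := φ) hc hε.ne' (hb.pos L hL).ne' (hs_le L hL) hFL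
  exact ⟨σ, L, hσ⟩

end ToyModelBounds

theorem exists_toyModelBounds {h A D : ℝ → ℝ} {x : ℝ} (hh : ContDiffAt ℝ 2 h x)
    (hA : ContDiffAt ℝ 2 A x) (hD : ContDiffAt ℝ 2 D x) (hnd : deriv (deriv h) x ≠ 0)
    (hApos : 0 < A x) :
    ∃ r > 0, ∃ τ, ∃ m > 0, ∃ M > 0, ∃ Λ, ToyModelBounds h A D (closedBall x r) τ m M Λ := by
  set m₀ := deriv (deriv h) x
  have hh' : ContDiffAt ℝ 1 (deriv h) x := hh.derivWithin (by norm_num)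
  have hA' : ContDiffAt ℝ 1 (deriv A) x := hA.derivWithin (by norm_num)
  have hh'' : ContinuousAt (deriv (deriv h)) x :=
    (hh'.derivWithin (m := 0) (by norm_num)).continuousAt
  obtain ⟨Λ, t, ht, hlip⟩ := ((hD.div hA hApos.ne').of_le one_le_two).exists_lipschitzOnWith
  have hev : ∀ᶠ L in 𝓝 x, ContDiffAt ℝ 1 (deriv h) L ∧
      |m₀| / 2 < SignType.sign m₀ * deriv (deriv h) L ∧ ContDiffAt ℝ 1 (deriv A) L ∧
      |deriv A L| < |deriv A x| + 1 ∧ 0 < A L ∧ L ∈ t :=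
    (hh'.eventually (by simp)).and <|
      (continuousAt_const.eventually_lt (continuousAt_const.mul hh'') (by
        show |m₀| / 2 < SignType.sign m₀ * m₀
        rw [sign_mul_self]; linarith [abs_pos.2 hnd])).and <|
      (hA'.eventually (by simp)).and <|
      (hA'.continuousAt.abs.eventually_lt continuousAt_const (lt_add_one _)).and <|
      (hA.continuousAt.eventually (lt_mem_nhds hApos)).and ht
  obtain ⟨r, hr, hball⟩ := nhds_basis_closedBall.eventually_iff.1 hev
  exact ⟨r, hr, SignType.sign m₀, |m₀| / 2, by positivity, |deriv A x| + 1, by positivity, Λ,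
    { abs_eq_one := by rcases hnd.lt_or_gt with hneg | hpos <;> simp [*]
      contDiffAt_deriv L hL := (hball hL).1
      le_mul_deriv_deriv L hL := (hball hL).2.1.le
      continuousAt_deriv L hL := (hball hL).2.2.1.continuousAt
      abs_deriv_le L hL := (hball hL).2.2.2.1.le
      pos L hL := (hball hL).2.2.2.2.1
      lipschitzOnWith := hlip.mono fun L hL => (hball hL).2.2.2.2.2 }⟩

theorem dissipative_equilibrium_simplified_condition_general
    (h A D : ℝ → ℝ) (Lsec σ₀ φ : ℝ)
    (hh : ContDiffAt ℝ 2 h Lsec) (hA : ContDiffAt ℝ 2 A Lsec)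
    (hD : ContDiffAt ℝ 2 D Lsec)
    (hnd : deriv (deriv h) Lsec ≠ 0)
    (hApos : 0 < A Lsec) (hsin : Real.sin (σ₀ - φ) = 0) :
    ∃ r > (0:ℝ), ∃ γ₁ > (0:ℝ), ∃ γ₂ > (0:ℝ), ∃ γ₃ > (0:ℝ),
      ∀ δ : ℝ, 0 < δ → δ < 1 →
        ∀ ε η L₀ : ℝ, 0 < ε → 0 ≤ η →
          |L₀ - Lsec| < r →
          deriv h L₀ + ε * deriv A L₀ * Real.cos (σ₀ - φ) = 0 →
          |η * D L₀ / (ε * A L₀)| ≤ 1 - δ →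
          γ₁ * ε + γ₂ * η + γ₃ * ε ^ 2 < δ →
          ∃ σd Ld : ℝ,
            deriv h Ld + ε * deriv A Ld * Real.cos (σd - φ) = 0 ∧
            ε * A Ld * Real.sin (σd - φ) - η * D Ld = 0 := by
  obtain ⟨r₀, hr₀, τ, m, hm, M, hM, Λ, hb⟩ := exists_toyModelBounds hh hA hD hnd hApos
  have hc : |cos (σ₀ - φ)| = 1 := by simp [abs_cos_eq_sqrt_one_sub_sin_sq, hsin]
  set K := 2 * M / m
  have hmK : m * K = 2 * M := mul_div_cancel₀ _ hm.ne'
  refine ⟨r₀ / 2, by positivity, 2 * K / r₀, by positivity, Λ * K + 1, by positivity, 1, one_pos,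
    ?_⟩
  intro δ hδ hδ₁ ε η L₀ hε hη hL₀ hL₀eq hs₀ hsmall
  have hγ₁ε : 0 ≤ 2 * K / r₀ * ε := by positivity
  have hγ₂η : 0 ≤ (Λ * K + 1) * η := by positivity
  have hKε : 2 * K * ε < r₀ := by
    have : 2 * K / r₀ * ε < 1 := by nlinarith
    rwa [div_mul_eq_mul_div, div_lt_one hr₀] at this
  have hΛK : Λ * K * η ≤ δ := by nlinarith
  refine (hb.mono (closedBall_subset_closedBall' ?_)).exists_equilibrium (ρ := K * ε) hc hε hη
    (by positivity) hL₀eq hs₀ ?_ ?_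
  · rw [Real.dist_eq]; linarith
  · nlinarith
  · nlinarith

/-- Simplified existence condition (Remark after the paper's Theorem 1):
there exist positive constants `γ₁, γ₂, γ₃` (and a radius `r`) such that for
every `δ ∈ (0,1)` and all `ε > 0`, `η ≥ 0` with
`|η D(L₀)/(ε A(L₀))| ≤ 1 - δ` and `γ₁ ε + γ₂ η + γ₃ ε² < δ`,
where `L₀` solves `h'(L) + ε A'(L) cos (σ₀ - φ) = 0` near `Lsec`,
the dissipative toy model admits an equilibrium point. -/
theorem dissipative_equilibrium_simplified_condition
    (h A D : ℝ → ℝ) (Lsec σ₀ φ : ℝ)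
    (hh : ContDiffAt ℝ 2 h Lsec) (hA : ContDiffAt ℝ 2 A Lsec)
    (hD : ContDiffAt ℝ 2 D Lsec)
    (hcrit : deriv h Lsec = 0) (hnd : deriv (deriv h) Lsec ≠ 0)
    (hApos : 0 < A Lsec) (hsin : Real.sin (σ₀ - φ) = 0) :
    ∃ r > (0:ℝ), ∃ γ₁ > (0:ℝ), ∃ γ₂ > (0:ℝ), ∃ γ₃ > (0:ℝ),
      ∀ δ : ℝ, 0 < δ → δ < 1 →
        ∀ ε η L₀ : ℝ, 0 < ε → 0 ≤ η →
          |L₀ - Lsec| < r →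
          deriv h L₀ + ε * deriv A L₀ * Real.cos (σ₀ - φ) = 0 →
          |η * D L₀ / (ε * A L₀)| ≤ 1 - δ →
          γ₁ * ε + γ₂ * η + γ₃ * ε ^ 2 < δ →
          ∃ σd Ld : ℝ,
            deriv h Ld + ε * deriv A Ld * Real.cos (σd - φ) = 0 ∧
            ε * A Ld * Real.sin (σd - φ) - η * D Ld = 0 :=
  dissipative_equilibrium_simplified_condition_general h A D Lsec σ₀ φ hh hA hD hnd hApos hsin
end
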